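/- arXiv:1709.08045 — 2 statements merged into one kernel-verified Lean document; each statement's English description precedes it below -/
import Mathlib

section
/- Let m ≥ 1, κ = (κ_1 ≥ … ≥ κ_m ≥ 0) a partition, and x a real symmetric positive semidefinite m×m matrix. If rank(x) = k and the length l(κ) = k, then Φ_κ(x) = ∫_{O(m)} Δ_κ(u x uᵀ) du > 0. -/
open MeasureTheory Matrix

noncomputable instance matrixMeasurableSpace {k l α : Type*} [MeasurableSpace α] :
    MeasurableSpace (Matrix k l α) :=
  inferInstanceAs (MeasurableSpace (k → l → α))

/-- The `i`-th leading principal minor of an `m×m` matrix (`i ≤ m`). -/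
noncomputable def leadingMinor {m : ℕ} (x : Matrix (Fin m) (Fin m) ℝ) (i : ℕ) (h : i ≤ m) : ℝ :=
  (x.submatrix (Fin.castLE h) (Fin.castLE h)).det

/-- The generalized power `Δ_κ(x) = ∏_{i=1}^m Δ_i(x)^(κ_i − κ_{i+1})` (`κ_{m+1} := 0`),
with the partition `κ` indexed by `Fin m` (so `κ j` is the part `κ_{j+1}`). -/
noncomputable def DeltaKappa {m : ℕ} (κ : Fin m → ℕ) (x : Matrix (Fin m) (Fin m) ℝ) : ℝ :=
  ∏ i : Fin m, leadingMinor x ((i : ℕ) + 1) i.isLt ^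
    (κ i - if h : (i : ℕ) + 1 < m then κ ⟨(i : ℕ) + 1, h⟩ else 0)

/-- `μ` is the normalized Haar measure on the orthogonal group `O(m)`: a left-translation
invariant Borel probability measure (such a measure is unique on the compact group `O(m)`). -/
def IsHaarO (m : ℕ) (μ : Measure (Matrix.orthogonalGroup (Fin m) ℝ)) : Prop :=
  IsProbabilityMeasure μ ∧
    ∀ v : Matrix.orthogonalGroup (Fin m) ℝ, μ.map (fun u => v * u) = μ

/-- The spherical polynomial `Φ_κ(x) = ∫_{O(m)} Δ_κ(u x uᵀ) du`, relative to the normalized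
Haar measure `μ` on `O(m)`. -/
noncomputable def PhiK {m : ℕ} (μ : Measure (Matrix.orthogonalGroup (Fin m) ℝ))
    (κ : Fin m → ℕ) (x : Matrix (Fin m) (Fin m) ℝ) : ℝ :=
  ∫ u, DeltaKappa κ
    ((u : Matrix (Fin m) (Fin m) ℝ) * x * (u : Matrix (Fin m) (Fin m) ℝ)ᵀ) ∂μ

/-! The integrand `u ↦ Δ_κ(u x uᵀ)` is continuous, and nonnegative because every leading principal
minor of the positive semidefinite matrix `u x uᵀ` is. Choosing `u` that diagonalizes `x` with
the eigenvalues in decreasing order, the first `k = rank x` diagonal entries are positive; as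
`Δ_κ` only involves the minors `Δ_i` with `i ≤ l(κ) = k`, the integrand is positive at `u`.
A left-invariant probability measure on the compact group `O(m)` charges every nonempty open
set, so the integral is positive. -/

instance matrixBorelSpace {k l α : Type*} [Countable k] [Countable l] [TopologicalSpace α]
    [MeasurableSpace α] [SecondCountableTopology α] [BorelSpace α] :
    BorelSpace (Matrix k l α) :=
  inferInstanceAs (BorelSpace (k → l → α))

instance Matrix.unitaryGroup.compactSpace {n 𝕜 : Type*} [Fintype n] [DecidableEq n] [RCLike 𝕜] :
    CompactSpace (unitaryGroup n 𝕜) := by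
  have hball : IsCompact (Set.univ.pi fun _ => Set.univ.pi fun _ => Metric.closedBall 0 1 :
      Set (Matrix n n 𝕜)) :=
    isCompact_univ_pi fun _ => isCompact_univ_pi fun _ => isCompact_closedBall 0 1
  refine isCompact_iff_compactSpace.mp <|
    hball.of_isClosed_subset (isClosed_unitary (R := Matrix n n 𝕜)) fun U hU i _ j _ => ?_
  simpa using entry_norm_bound_of_unitary hU i j

theorem IsHaarO.isOpenPosMeasure {m : ℕ} {μ : Measure (orthogonalGroup (Fin m) ℝ)}
    (hμ : IsHaarO m μ) : μ.IsOpenPosMeasure := by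
  have : IsProbabilityMeasure μ := hμ.1
  have : μ.IsMulLeftInvariant := ⟨hμ.2⟩
  exact isOpenPosMeasure_of_mulLeftInvariant_of_compact _ isCompact_univ (by simp)

theorem exists_perm_antitone {α : Type*} [LinearOrder α] {m : ℕ} (f : Fin m → α) :
    ∃ σ : Equiv.Perm (Fin m), Antitone (f ∘ σ) :=
  ⟨Tuple.sort (OrderDual.toDual ∘ f), Tuple.monotone_sort (OrderDual.toDual ∘ f)⟩

theorem Antitone.pos_of_lt_card_ne_zero {α : Type*} [LinearOrder α] [Zero α] {m : ℕ}
    {d : Fin m → α} (hd : Antitone d) (hnn : 0 ≤ d) {j : Fin m}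
    (hj : (j : ℕ) < Fintype.card {i // d i ≠ 0}) : 0 < d j := by
  by_contra! hj0
  have hsupp : ∀ i, d i ≠ 0 → i < j := fun i hi => by
    by_contra! hji
    exact hi (le_antisymm ((hd hji).trans hj0) (hnn i))
  have : Fintype.card {i // d i ≠ 0} ≤ j := by
    rw [Fintype.card_subtype, ← Fin.card_Iio]
    exact Finset.card_le_card fun i hi => Finset.mem_Iio.2 (hsupp i (Finset.mem_filter.1 hi).2)
  omega

theorem submatrix_mul_mul_transpose_submatrix {m n : Type*} [Fintype m] [Fintype n]
    (u : Matrix m n ℝ) (x : Matrix n n ℝ) (σ : Equiv.Perm m) :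
    u.submatrix σ id * x * (u.submatrix σ id)ᵀ = (u * x * uᵀ).submatrix σ σ := by
  rw [transpose_submatrix, submatrix_mul _ _ _ id _ Function.bijective_id,
    submatrix_mul _ _ _ id _ Function.bijective_id, submatrix_id_id]

theorem submatrix_mem_orthogonalGroup {n : Type*} [Fintype n] [DecidableEq n]
    {u : Matrix n n ℝ} (hu : u ∈ orthogonalGroup n ℝ) (σ : Equiv.Perm n) :
    u.submatrix σ id ∈ orthogonalGroup n ℝ := by
  rw [mem_orthogonalGroup_iff] at hu ⊢
  simpa [hu] using submatrix_mul_mul_transpose_submatrix u 1 σ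

theorem rank_orthogonal_mul_mul_transpose {n : Type*} [Fintype n] [DecidableEq n]
    (u : orthogonalGroup n ℝ) (x : Matrix n n ℝ) : ((u : Matrix n n ℝ) * x * uᵀ).rank = x.rank := by
  have hdet : IsUnit (u : Matrix n n ℝ).det := UnitaryGroup.det_isUnit u
  rw [rank_mul_eq_left_of_isUnit_det _ _ (by rwa [det_transpose]),
    rank_mul_eq_right_of_isUnit_det _ _ hdet]

theorem Matrix.PosSemidef.mul_mul_transpose_same {m n : Type*} [Fintype m] [Fintype n]
    {x : Matrix n n ℝ} (hx : x.PosSemidef) (u : Matrix m n ℝ) : (u * x * uᵀ).PosSemidef := by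
  simpa using hx.mul_mul_conjTranspose_same u

theorem Matrix.IsHermitian.exists_orthogonal_conj_eq_diagonal {n : Type*} [Fintype n]
    [DecidableEq n] {x : Matrix n n ℝ} (hx : x.IsHermitian) :
    ∃ u ∈ orthogonalGroup n ℝ, u * x * uᵀ = diagonal hx.eigenvalues := by
  refine ⟨star hx.eigenvectorUnitary, (star hx.eigenvectorUnitary).2, ?_⟩
  simpa [star_eq_conjTranspose] using hx.conjStarAlgAut_star_eigenvectorUnitary

theorem Matrix.IsHermitian.exists_orthogonal_conj_eq_diagonal_antitone {m : ℕ}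
    {x : Matrix (Fin m) (Fin m) ℝ} (hx : x.IsHermitian) :
    ∃ u ∈ orthogonalGroup (Fin m) ℝ, ∃ d : Fin m → ℝ, Antitone d ∧ u * x * uᵀ = diagonal d := by
  obtain ⟨u, hu, hconj⟩ := hx.exists_orthogonal_conj_eq_diagonal
  obtain ⟨σ, hσ⟩ := exists_perm_antitone hx.eigenvalues
  refine ⟨u.submatrix σ id, submatrix_mem_orthogonalGroup hu σ, _, hσ, ?_⟩
  rw [submatrix_mul_mul_transpose_submatrix, hconj, submatrix_diagonal_equiv]

section DeltaKappa

variable {m : ℕ} (κ : Fin m → ℕ)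

theorem continuous_deltaKappa : Continuous (DeltaKappa κ) := by
  unfold DeltaKappa leadingMinor
  fun_prop

theorem deltaKappa_nonneg {x : Matrix (Fin m) (Fin m) ℝ} (hx : x.PosSemidef) :
    0 ≤ DeltaKappa κ x :=
  Finset.prod_nonneg fun _ _ => pow_nonneg (hx.submatrix _).det_nonneg _

theorem leadingMinor_diagonal (d : Fin m → ℝ) (i : ℕ) (h : i ≤ m) :
    leadingMinor (diagonal d) i h = ∏ j : Fin i, d (Fin.castLE h j) := by
  rw [leadingMinor, submatrix_diagonal _ _ (Fin.castLE_injective h), det_diagonal]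
  rfl

theorem deltaKappa_diagonal_pos {d : Fin m → ℝ} (hd : ∀ i j : Fin m, κ i ≠ 0 → j ≤ i → 0 < d j) :
    0 < DeltaKappa κ (diagonal d) := by
  refine Finset.prod_pos fun i _ => ?_
  rcases eq_or_ne (κ i) 0 with hκi | hκi
  · simp [hκi]
  refine pow_pos ?_ _
  rw [leadingMinor_diagonal]
  exact Finset.prod_pos fun j _ => hd i _ hκi (Nat.lt_succ_iff.mp j.isLt)

end DeltaKappa

theorem sphericalPoly_pos_general
    (m : ℕ) (κ : Fin m → ℕ)
    (μ : Measure (Matrix.orthogonalGroup (Fin m) ℝ)) (hμ : IsHaarO m μ)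
    (x : Matrix (Fin m) (Fin m) ℝ) (hx : x.PosSemidef)
    (k : ℕ) (hrank : x.rank = k) (hlen : ∀ i : Fin m, (i : ℕ) < k ↔ κ i ≠ 0) :
    0 < PhiK μ κ x := by
  have : IsProbabilityMeasure μ := hμ.1
  have : μ.IsOpenPosMeasure := hμ.isOpenPosMeasure
  obtain ⟨u, hu, d, hd, hconj⟩ := hx.isHermitian.exists_orthogonal_conj_eq_diagonal_antitone
  have hd_psd : (diagonal d).PosSemidef := hconj ▸ hx.mul_mul_transpose_same u
  have hd_nonneg : 0 ≤ d := fun i => by simpa using hd_psd.diag_nonneg (i := i)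
  have hd_rank : Fintype.card {i // d i ≠ 0} = k := by
    rw [← rank_diagonal, ← hconj, rank_orthogonal_mul_mul_transpose ⟨u, hu⟩, hrank]
  have hd_pos : ∀ i j : Fin m, κ i ≠ 0 → j ≤ i → 0 < d j := fun i j hκi hji =>
    hd.pos_of_lt_card_ne_zero hd_nonneg (hd_rank ▸ lt_of_le_of_lt hji ((hlen i).mpr hκi))
  have hcont : Continuous fun v : orthogonalGroup (Fin m) ℝ =>
      DeltaKappa κ ((v : Matrix (Fin m) (Fin m) ℝ) * x * (v : Matrix (Fin m) (Fin m) ℝ)ᵀ) :=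
    (continuous_deltaKappa κ).comp (by fun_prop)
  have hnn : 0 ≤ fun v : orthogonalGroup (Fin m) ℝ =>
      DeltaKappa κ ((v : Matrix (Fin m) (Fin m) ℝ) * x * (v : Matrix (Fin m) (Fin m) ℝ)ᵀ) :=
    fun v => deltaKappa_nonneg κ (hx.mul_mul_transpose_same (v : Matrix (Fin m) (Fin m) ℝ))
  have hne : DeltaKappa κ (u * x * uᵀ) ≠ 0 := by
    rw [hconj]
    exact (deltaKappa_diagonal_pos κ hd_pos).ne'
  exact hcont.integral_pos_of_hasCompactSupport_nonneg_nonzero (x := ⟨u, hu⟩)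
    (.of_compactSpace _) hnn hne

/-- Strict positivity of spherical polynomials: if `x` is positive semidefinite with
`rank x = k` and the partition `κ` has length `l(κ) = k` (its first `k` parts are nonzero and
the rest vanish), then `Φ_κ(x) > 0`. -/
theorem sphericalPoly_pos
    (m : ℕ) (hm : 1 ≤ m) (κ : Fin m → ℕ) (hκ : Antitone κ)
    (μ : Measure (Matrix.orthogonalGroup (Fin m) ℝ)) (hμ : IsHaarO m μ)
    (x : Matrix (Fin m) (Fin m) ℝ) (hx : x.PosSemidef)
    (k : ℕ) (hrank : x.rank = k) (hlen : ∀ i : Fin m, (i : ℕ) < k ↔ κ i ≠ 0) :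
    0 < PhiK μ κ x :=
  sphericalPoly_pos_general m κ μ hμ x hx k hrank hlen
end

section
/- Let μ be a probability measure on [0,∞), let 0 ≤ s₀ < s₁, and let h be a real-analytic function on (−∞, s₁). Suppose that for every s < s₀ the function x ↦ e^{sx} is μ-integrable and ∫_{[0,∞)} e^{sx} μ(dx) = h(s). Then for every s < s₁ the function x ↦ e^{sx} is μ-integrable and ∫_{[0,∞)} e^{sx} μ(dx) = h(s). -/
open MeasureTheory ProbabilityTheory Real Set Filter Topology
open scoped Nat ENNReal NNReal

/-!
Since `μ` lives on `[0, ∞)`, the set `I` of `s` with `e^{sx}` integrable is a down-set, and the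
mgf is analytic on its interior; by the identity theorem it agrees with `h` on `(-∞, sup I)`.
If `a = sup I < s₁`, then `h` is analytic on a ball around `a`, so at a point `t` slightly left
of `a` the Taylor series of the mgf, which is that of `h`, has radius of convergence reaching
past `a`. Its coefficients `∫ x^n e^{tx} dμ / n!` are nonnegative, so by Tonelli summability of
the series at `r` is exactly integrability of `e^{(t+r)x}`, which pushes `I` beyond `a`
(the Pringsheim–Landau argument).
-/

lemma hasSum_pow_div_factorial_mul_exp (t r x : ℝ) :
    HasSum (fun n : ℕ => r ^ n / n ! * (x ^ n * exp (t * x))) (exp ((t + r) * x)) := by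
  have hterm (n : ℕ) : r ^ n / n ! * (x ^ n * exp (t * x)) = (r * x) ^ n / n ! * exp (t * x) := by
    rw [mul_pow]; ring
  simp_rw [hterm, add_mul, add_comm (t * x), exp_add, exp_eq_exp_ℝ]
  exact (NormedSpace.expSeries_div_hasSum_exp (r * x)).mul_right _

lemma eqOn_Iio_of_eqOn_Iio {E : Type*} [NormedAddCommGroup E] [NormedSpace ℝ E]
    {f g : ℝ → E} {a b : ℝ} (hab : a ≤ b) (hf : AnalyticOnNhd ℝ f (Iio b))
    (hg : AnalyticOnNhd ℝ g (Iio b)) (hfg : EqOn f g (Iio a)) : EqOn f g (Iio b) :=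
  hf.eqOn_of_preconnected_of_eventuallyEq hg isPreconnected_Iio
    ((sub_one_lt a).trans_le hab) (hfg.eventuallyEq_of_mem (Iio_mem_nhds (sub_one_lt a)))

section NonnegRandomVariable

variable {Ω : Type*} {m : MeasurableSpace Ω} {X : Ω → ℝ} {μ : Measure Ω}

lemma integrable_exp_mul_add_of_summable (hX : AEMeasurable X μ)
    (hX_nonneg : ∀ᵐ ω ∂μ, 0 ≤ X ω) {t r : ℝ} (hr : 0 ≤ r)
    (hint : ∀ n : ℕ, Integrable (fun ω => X ω ^ n * exp (t * X ω)) μ)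
    (hsum : Summable fun n : ℕ => μ[fun ω => X ω ^ n * exp (t * X ω)] / n ! * r ^ n) :
    Integrable (fun ω => exp ((t + r) * X ω)) μ := by
  set F : ℕ → Ω → ℝ := fun n ω => r ^ n / n ! * (X ω ^ n * exp (t * X ω))
  have hF_int n : Integrable (F n) μ := (hint n).const_mul _
  have hF_nonneg : ∀ᵐ ω ∂μ, ∀ n, 0 ≤ F n ω := by
    filter_upwards [hX_nonneg] with ω hω n
    positivity
  refine ⟨(hX.const_mul (t + r)).exp.aestronglyMeasurable, hasFiniteIntegral_iff_enorm.2 ?_⟩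
  calc ∫⁻ ω, ‖exp ((t + r) * X ω)‖ₑ ∂μ
      = ∫⁻ ω, ∑' n, ENNReal.ofReal (F n ω) ∂μ := by
        refine lintegral_congr_ae ?_
        filter_upwards [hF_nonneg] with ω hω
        have hsum_ω := hasSum_pow_div_factorial_mul_exp t r (X ω)
        rw [Real.enorm_eq_ofReal (exp_pos _).le, ← hsum_ω.tsum_eq,
          ENNReal.ofReal_tsum_of_nonneg hω hsum_ω.summable]
    _ = ∑' n, ENNReal.ofReal (∫ ω, F n ω ∂μ) := by
        rw [lintegral_tsum fun n => (hF_int n).aemeasurable.ennreal_ofReal]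
        refine tsum_congr fun n => (ofReal_integral_eq_lintegral_ofReal (hF_int n) ?_).symm
        filter_upwards [hF_nonneg] with ω hω using hω n
    _ = ENNReal.ofReal (∑' n, ∫ ω, F n ω ∂μ) := by
        refine (ENNReal.ofReal_tsum_of_nonneg (fun n => ?_) ?_).symm
        · exact integral_nonneg_of_ae (by filter_upwards [hF_nonneg] with ω hω using hω n)
        · refine hsum.congr fun n => ?_
          rw [integral_const_mul]
          ring
    _ < ∞ := ENNReal.ofReal_lt_top

lemma Iic_subset_integrableExpSet (hX : AEMeasurable X μ)
    (hX_nonneg : ∀ᵐ ω ∂μ, 0 ≤ X ω) {v : ℝ} (hv : v ∈ integrableExpSet X μ) :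
    Iic v ⊆ integrableExpSet X μ := by
  intro u hu
  refine Integrable.mono' hv (hX.const_mul u).exp.aestronglyMeasurable ?_
  filter_upwards [hX_nonneg] with ω hω
  rw [Real.norm_of_nonneg (exp_pos _).le]
  exact exp_le_exp.2 (mul_le_mul_of_nonneg_right hu hω)

lemma add_mem_integrableExpSet_of_lt_radius (hX : AEMeasurable X μ)
    (hX_nonneg : ∀ᵐ ω ∂μ, 0 ≤ X ω) {t : ℝ} (ht : t ∈ interior (integrableExpSet X μ))
    {r : ℝ≥0} (hr : (r : ℝ≥0∞) < (FormalMultilinearSeries.ofScalars ℝ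
      fun n ↦ μ[fun ω ↦ X ω ^ n * exp (t * X ω)] / n !).radius) :
    t + r ∈ integrableExpSet X μ := by
  refine integrable_exp_mul_add_of_summable hX hX_nonneg r.coe_nonneg
    (integrable_pow_mul_exp_of_mem_interior_integrableExpSet ht) ?_
  refine (FormalMultilinearSeries.summable_norm_mul_pow _ hr).congr fun n => ?_
  have hmoment : 0 ≤ μ[fun ω ↦ X ω ^ n * exp (t * X ω)] := integral_nonneg_of_ae <| by
    filter_upwards [hX_nonneg] with ω hω using by positivity
  rw [FormalMultilinearSeries.ofScalars_norm, Real.norm_of_nonneg (by positivity)]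

lemma exists_gt_mem_integrableExpSet (hX : AEMeasurable X μ)
    (hX_nonneg : ∀ᵐ ω ∂μ, 0 ≤ X ω) {h : ℝ → ℝ} {a : ℝ} (ha : AnalyticAt ℝ h a)
    (hI : Iio a ⊆ integrableExpSet X μ) (heq : EqOn (mgf X μ) h (Iio a)) :
    ∃ b, a < b ∧ b ∈ integrableExpSet X μ := by
  obtain ⟨p, r, hp⟩ := ha
  obtain ⟨ρ, hρ, hρr⟩ := ENNReal.lt_iff_exists_nnreal_btwn.mp hp.r_pos
  -- Expand at `t = a - δ`: the series there converges on radius `r - δ > 2δ`, reaching `a + δ`.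
  set δ : ℝ≥0 := ρ / 3
  have hδ : (0 : ℝ) < δ := by have := ENNReal.coe_pos.1 hρ; positivity
  have h3δ : (2 * δ + δ : ℝ≥0∞) < r := by
    rw [show (2 * δ + δ : ℝ≥0∞) = ρ by norm_cast; simp only [δ]; ring]
    exact hρr
  set t := a - δ
  have hnorm : ‖-(δ : ℝ)‖₊ = δ := by simp
  have hq := hp.changeOrigin (y := -(δ : ℝ)) (by rw [hnorm]; exact le_add_self.trans_lt h3δ)
  rw [← sub_eq_add_neg, hnorm] at hq
  have ht : t ∈ interior (integrableExpSet X μ) :=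
    isOpen_Iio.subset_interior_iff.2 hI (sub_lt_self a hδ)
  have hmgf_eq_h : mgf X μ =ᶠ[𝓝 t] h :=
    heq.eventuallyEq_of_mem (Iio_mem_nhds (sub_lt_self a hδ))
  have hseries := (hasFPowerSeriesAt_mgf ht).eq_formalMultilinearSeries
    (hq.hasFPowerSeriesAt.congr hmgf_eq_h.symm)
  refine ⟨t + (2 * δ : ℝ≥0), by push_cast [t]; linarith, ?_⟩
  refine add_mem_integrableExpSet_of_lt_radius hX hX_nonneg ht ?_
  rw [hseries]
  exact (lt_tsub_iff_right.2 (by exact_mod_cast h3δ)).trans_le hq.r_le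

lemma Iio_subset_integrableExpSet (hX : AEMeasurable X μ)
    (hX_nonneg : ∀ᵐ ω ∂μ, 0 ≤ X ω) {h : ℝ → ℝ} {s₀ s₁ : ℝ}
    (hh : AnalyticOnNhd ℝ h (Iio s₁)) (hI₀ : Iio s₀ ⊆ integrableExpSet X μ)
    (heq : EqOn (mgf X μ) h (Iio s₀)) : Iio s₁ ⊆ integrableExpSet X μ := by
  intro s hs₁
  by_contra hs_notMem
  have hbdd : ∀ u ∈ integrableExpSet X μ, u < s := fun u hu =>
    lt_of_not_ge fun hsu => hs_notMem (Iic_subset_integrableExpSet hX hX_nonneg hu hsu)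
  have hne : (integrableExpSet X μ).Nonempty := ⟨s₀ - 1, hI₀ (sub_one_lt s₀)⟩
  have hbddAbove : BddAbove (integrableExpSet X μ) := ⟨s, fun u hu => (hbdd u hu).le⟩
  set a := sSup (integrableExpSet X μ)
  have has : a ≤ s := csSup_le hne fun u hu => (hbdd u hu).le
  have hs₀a : s₀ ≤ a := by
    simpa only [csSup_Iio] using csSup_le_csSup hbddAbove nonempty_Iio hI₀
  have hIio : Iio a ⊆ integrableExpSet X μ := fun u hu => by
    obtain ⟨w, hw, huw⟩ := exists_lt_of_lt_csSup hne hu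
    exact Iic_subset_integrableExpSet hX hX_nonneg hw huw.le
  have heqa : EqOn (mgf X μ) h (Iio a) :=
    eqOn_Iio_of_eqOn_Iio hs₀a (analyticOnNhd_mgf.mono (isOpen_Iio.subset_interior_iff.2 hIio))
      (hh.mono (Iio_subset_Iio (has.trans hs₁.le))) heq
  obtain ⟨b, hab, hb⟩ :=
    exists_gt_mem_integrableExpSet hX hX_nonneg (hh a (has.trans_lt hs₁)) hIio heqa
  exact (le_csSup hbddAbove hb).not_gt hab

end NonnegRandomVariable

theorem mgf_analytic_extension_general
    (μ : Measure ℝ) (hsupp : ∀ᵐ x ∂μ, 0 ≤ x)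
    (s₀ s₁ : ℝ) (hs : s₀ < s₁)
    (h : ℝ → ℝ) (hh : AnalyticOnNhd ℝ h (Set.Iio s₁))
    (heq : ∀ s : ℝ, s < s₀ →
      Integrable (fun x => Real.exp (s * x)) μ ∧ ∫ x, Real.exp (s * x) ∂μ = h s) :
    ∀ s : ℝ, s < s₁ →
      Integrable (fun x => Real.exp (s * x)) μ ∧ ∫ x, Real.exp (s * x) ∂μ = h s := by
  have hI₀ : Iio s₀ ⊆ integrableExpSet id μ := fun s hs => (heq s hs).1
  have heq₀ : EqOn (mgf id μ) h (Iio s₀) := fun s hs => (heq s hs).2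
  have hI := Iio_subset_integrableExpSet measurable_id.aemeasurable hsupp hh hI₀ heq₀
  have hmgf : EqOn (mgf id μ) h (Iio s₁) :=
    eqOn_Iio_of_eqOn_Iio hs.le (analyticOnNhd_mgf.mono (isOpen_Iio.subset_interior_iff.2 hI))
      hh heq₀
  exact fun s hs => ⟨hI hs, hmgf hs⟩

/-- Analytic extension of the moment generating function: if `μ` is a probability measure on
`[0,∞)`, `h` is real-analytic on `(−∞, s₁)`, and `∫ e^{sx} dμ = h(s)` (with integrability) for
all `s < s₀`, where `0 ≤ s₀ < s₁`, then the same holds for all `s < s₁`. -/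
theorem mgf_analytic_extension
    (μ : Measure ℝ) (hμ : IsProbabilityMeasure μ) (hsupp : ∀ᵐ x ∂μ, 0 ≤ x)
    (s₀ s₁ : ℝ) (hs₀ : 0 ≤ s₀) (hs : s₀ < s₁)
    (h : ℝ → ℝ) (hh : AnalyticOnNhd ℝ h (Set.Iio s₁))
    (heq : ∀ s : ℝ, s < s₀ →
      Integrable (fun x => Real.exp (s * x)) μ ∧ ∫ x, Real.exp (s * x) ∂μ = h s) :
    ∀ s : ℝ, s < s₁ →
      Integrable (fun x => Real.exp (s * x)) μ ∧ ∫ x, Real.exp (s * x) ∂μ = h s :=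
  mgf_analytic_extension_general μ hsupp s₀ s₁ hs h hh heq
end
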